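/- Let d ≥ 1 and let U, V be d × d unitary matrices. Start from the state |0⟩_Q|0⟩_{Q'} ⊗ |Φ⁺⟩_{AB} on ℂ² ⊗ ℂ² ⊗ ℂ^d ⊗ ℂ^d, where |Φ⁺⟩ := (1/√d)Σ_j |j⟩⊗|j⟩. Apply in order: a Hadamard on Q; a CNOT with control Q and target Q'; the controlled-U on QA (applying U to A when Q = |1⟩) together with the anticontrolled-Vᵀ on Q'B (applying Vᵀ to B when Q' = |0⟩); and finally a CNOT with control Q and target Q'. Then the reduced density matrix on qubit Q is ρ_Q = (1/2) [ [1, (1/d)Tr(U†V)], [(1/d)Tr(V†U), 1] ]; in particular, measuring Q in the X and Y bases yields the real and imaginary parts of (1/d)Tr(V†U) (the Power of Two Qubits). -/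

import Mathlib

open Matrix Complex

noncomputable section

/-- The Hadamard gate. -/
def Hmat : Matrix (Fin 2) (Fin 2) ℂ :=
  ((1 / Real.sqrt 2 : ℝ) : ℂ) • !![1, 1; 1, -1]

/-- The initial state `|0⟩_Q |0⟩_{Q'} ⊗ |Φ⁺⟩_{AB}` on `ℂ² ⊗ ℂ² ⊗ ℂ^d ⊗ ℂ^d`, where
`|Φ⁺⟩ = (1/√d) Σ_j |j⟩⊗|j⟩`. -/
def psi0 (d : ℕ) : Fin 2 × Fin 2 × Fin d × Fin d → ℂ :=
  fun p => if p.1 = 0 ∧ p.2.1 = 0 ∧ p.2.2.1 = p.2.2.2 then ((1 / Real.sqrt d : ℝ) : ℂ) else 0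

/-- The Hadamard gate on the qubit `Q` (identity elsewhere). -/
def gateHQ (d : ℕ) :
    Matrix (Fin 2 × Fin 2 × Fin d × Fin d) (Fin 2 × Fin 2 × Fin d × Fin d) ℂ :=
  Matrix.of fun p q => Hmat p.1 q.1 * (if p.2 = q.2 then 1 else 0)

/-- CNOT with control `Q` and target `Q'` (identity on `A`, `B`): `|c,t⟩ ↦ |c, t+c⟩`. -/
def gateCNOT (d : ℕ) :
    Matrix (Fin 2 × Fin 2 × Fin d × Fin d) (Fin 2 × Fin 2 × Fin d × Fin d) ℂ :=
  Matrix.of fun p q =>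
    if p.1 = q.1 ∧ p.2.1 = q.2.1 + q.1 ∧ p.2.2 = q.2.2 then 1 else 0

/-- The controlled-`U` on `QA` (applying `U` to `A` when `Q = |1⟩`) performed in parallel
with the anticontrolled-`Vᵀ` on `Q'B` (applying `Vᵀ` to `B` when `Q' = |0⟩`). -/
def gateCUV (d : ℕ) (U V : Matrix (Fin d) (Fin d) ℂ) :
    Matrix (Fin 2 × Fin 2 × Fin d × Fin d) (Fin 2 × Fin 2 × Fin d × Fin d) ℂ :=
  Matrix.of fun p q =>
    (if p.1 = q.1 ∧ p.2.1 = q.2.1 then 1 else 0) *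
    (if q.1 = 1 then U p.2.2.1 q.2.2.1 else (if p.2.2.1 = q.2.2.1 then 1 else 0)) *
    (if q.2.1 = 0 then Vᵀ p.2.2.2 q.2.2.2 else (if p.2.2.2 = q.2.2.2 then 1 else 0))

/-- The final state of the Power of Two Qubits circuit. -/
def psiFinal (d : ℕ) (U V : Matrix (Fin d) (Fin d) ℂ) :
    Fin 2 × Fin 2 × Fin d × Fin d → ℂ :=
  (gateCNOT d).mulVec ((gateCUV d U V).mulVec ((gateCNOT d).mulVec
    ((gateHQ d).mulVec (psi0 d))))

/-- The reduced density matrix on the qubit `Q` of a pure state. -/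
def rhoQ (d : ℕ) (ψ : Fin 2 × Fin 2 × Fin d × Fin d → ℂ) :
    Matrix (Fin 2) (Fin 2) ℂ :=
  Matrix.of fun a b => ∑ r : Fin 2 × Fin d × Fin d, ψ (a, r) * star (ψ (b, r))

/-!
The Hadamard and the first CNOT turn `|00⟩|Φ⁺⟩` into `(|00⟩ + |11⟩)|Φ⁺⟩/√2`. On the `|11⟩`
branch `U` acts on `A`; on the `|00⟩` branch `Vᵀ` acts on `B`, and `(1 ⊗ Vᵀ)|Φ⁺⟩ = (V ⊗ 1)|Φ⁺⟩`.
So after the last CNOT resets `Q'` to `|0⟩`, the state is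
`(|0⟩_Q ⊗ V + |1⟩_Q ⊗ U) ⊗ |0⟩_{Q'} / √(2d)`, matrices read as vectors of `A ⊗ B`, and the entries
of `ρ_Q` are the Hilbert–Schmidt inner products `Tr(W_bᴴ W_a)/(2d)` of the two branches
`W_0 = V`, `W_1 = U`; the diagonal is `1/2` by unitarity.
-/

variable {d : ℕ}

def amp (d : ℕ) : ℝ := 1 / Real.sqrt 2 * (1 / Real.sqrt d)

lemma amp_sq (d : ℕ) : (amp d : ℂ) ^ 2 = 1 / (2 * d) := by
  have : amp d ^ 2 = 1 / (2 * d) := by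
    rw [amp, mul_pow, div_pow, div_pow, Real.sq_sqrt zero_le_two, Real.sq_sqrt d.cast_nonneg]
    ring
  simpa using congrArg ((↑) : ℝ → ℂ) this

lemma gateHQ_mulVec (ψ : Fin 2 × Fin 2 × Fin d × Fin d → ℂ) :
    gateHQ d *ᵥ ψ = fun p => ∑ c, Hmat p.1 c * ψ (c, p.2) := by
  ext p
  simp [gateHQ, mulVec, dotProduct, Fintype.sum_prod_type]

lemma gateHQ_mulVec_psi0 :
    gateHQ d *ᵥ psi0 d = fun p => if p.2.1 = 0 ∧ p.2.2.1 = p.2.2.2 then (amp d : ℂ) else 0 := by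
  ext ⟨a, r⟩
  fin_cases a <;> simp [gateHQ_mulVec, psi0, Hmat, amp, Fin.sum_univ_two]

lemma fin_two_add_add_self (x y : Fin 2) : x + y + y = x := by
  decide +revert

lemma fin_two_add_eq_zero_iff (x y : Fin 2) : x + y = 0 ↔ x = y := by
  decide +revert

lemma gateCNOT_mulVec (ψ : Fin 2 × Fin 2 × Fin d × Fin d → ℂ) :
    gateCNOT d *ᵥ ψ = fun p => ψ (p.1, p.2.1 + p.1, p.2.2) := by
  ext ⟨a, b, r⟩
  rw [mulVec, dotProduct, Finset.sum_eq_single (a, b + a, r)]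
  · simp [gateCNOT, fin_two_add_add_self]
  · rintro ⟨a', b', r'⟩ - hne
    have : ¬(a = a' ∧ b = b' + a' ∧ r = r') := by
      rintro ⟨rfl, rfl, rfl⟩
      exact hne (by rw [fin_two_add_add_self])
    simp [gateCNOT, this]
  · simp

lemma gateCUV_mulVec_ghz (U V : Matrix (Fin d) (Fin d) ℂ) (c : ℂ) :
    gateCUV d U V *ᵥ (fun p => if p.1 = p.2.1 ∧ p.2.2.1 = p.2.2.2 then c else 0) =
      fun p => if p.1 = p.2.1 then c * (![V, U] p.1) p.2.2.1 p.2.2.2 else 0 := by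
  ext ⟨a, b, i, j⟩
  simp only [mulVec, dotProduct, Fintype.sum_prod_type, Fin.sum_univ_two]
  fin_cases a <;> fin_cases b <;>
    simp [gateCUV, mul_comm, Finset.sum_ite_eq]

lemma psiFinal_eq (U V : Matrix (Fin d) (Fin d) ℂ) :
    psiFinal d U V =
      fun p => if p.2.1 = 0 then ((amp d : ℂ) • ![V, U]) p.1 p.2.2.1 p.2.2.2 else 0 := by
  have hghz : gateCNOT d *ᵥ (gateHQ d *ᵥ psi0 d) =
      fun p => if p.1 = p.2.1 ∧ p.2.2.1 = p.2.2.2 then (amp d : ℂ) else 0 := by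
    simp only [gateHQ_mulVec_psi0, gateCNOT_mulVec, fin_two_add_eq_zero_iff, eq_comm]
  rw [psiFinal, hghz, gateCUV_mulVec_ghz, gateCNOT_mulVec]
  ext ⟨a, b, r⟩
  fin_cases a <;> fin_cases b <;> simp

lemma rhoQ_of_branches (W : Fin 2 → Matrix (Fin d) (Fin d) ℂ) :
    rhoQ d (fun p => if p.2.1 = 0 then W p.1 p.2.2.1 p.2.2.2 else 0) =
      of fun a b => ((W b)ᴴ * W a).trace := by
  ext a b
  simp only [rhoQ, of_apply, Fintype.sum_prod_type, Fin.sum_univ_two, one_ne_zero, ↓reduceIte,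
    star_zero, mul_zero, Finset.sum_const_zero, add_zero, trace, diag_apply, mul_apply,
    conjTranspose_apply]
  rw [Finset.sum_comm]
  simp only [mul_comm]

lemma trace_conjTranspose_mul_self_of_mem_unitaryGroup {n α : Type*} [Fintype n] [DecidableEq n]
    [CommRing α] [StarRing α] {W : Matrix n n α} (hW : W ∈ unitaryGroup n α) :
    (Wᴴ * W).trace = Fintype.card n := by
  rw [← star_eq_conjTranspose, mem_unitaryGroup_iff'.mp hW, trace_one]

lemma rhoQ_psiFinal (U V : Matrix (Fin d) (Fin d) ℂ) :
    rhoQ d (psiFinal d U V) = (1 / (2 * d) : ℂ) •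
      !![(Vᴴ * V).trace, (Uᴴ * V).trace; (Vᴴ * U).trace, (Uᴴ * U).trace] := by
  rw [psiFinal_eq, rhoQ_of_branches, eta_fin_two (of _)]
  simp [conjTranspose_smul, trace_smul, smul_smul, ← sq, amp_sq]

/-- **Power of Two Qubits.** After the circuit
`CNOT_{QQ'} ∘ (C_U ⊗ anti-C_{Vᵀ}) ∘ CNOT_{QQ'} ∘ H_Q` applied to
`|0⟩|0⟩|Φ⁺⟩`, the reduced state of `Q` is
`ρ_Q = (1/2)[[1, Tr(U†V)/d], [Tr(V†U)/d, 1]]`. -/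
theorem stmt13 (d : ℕ) (hd : 1 ≤ d) (U V : Matrix (Fin d) (Fin d) ℂ)
    (hU : U ∈ Matrix.unitaryGroup (Fin d) ℂ)
    (hV : V ∈ Matrix.unitaryGroup (Fin d) ℂ) :
    rhoQ d (psiFinal d U V) =
      (1 / 2 : ℂ) • !![1, (Uᴴ * V).trace / d; (Vᴴ * U).trace / d, 1] := by
  have hd0 : (d : ℂ) ≠ 0 := Nat.cast_ne_zero.mpr (by omega)
  rw [rhoQ_psiFinal, trace_conjTranspose_mul_self_of_mem_unitaryGroup hU,
    trace_conjTranspose_mul_self_of_mem_unitaryGroup hV, Fintype.card_fin]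
  rw [show (1 / (2 * d) : ℂ) = 1 / 2 * (1 / d) by ring, mul_smul]
  congr 1
  ext i j
  fin_cases i <;> fin_cases j <;> simp [hd0, div_eq_inv_mul]

end
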